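/- Let ς : ℝ → ℝ be C⁴ with ς(0)=0, ς'(0)=0, ς''(0) < 0, let σ > 0, v ~ N(0,σ²), and define G(θ, a) = E[ς(θ + a sin(v)) sin(v)]. Suppose θ(a) = b₁a + b₂a² + O(a³) solves G(θ(a), a) = 0 for small a. Then b₁ = 0 and b₂ = -ς'''(0)(3 - 4e^{-2σ²} + e^{-8σ²}) / (24 ς''(0)(1 - e^{-2σ²})). -/

import Mathlib

open MeasureTheory ProbabilityTheory Filter Asymptotics Real Topology

/-!
Write `ς = c₂ x² + c₃ x³ + r` with `r = o(x³)` (Taylor). Since the centred Gaussian is symmetric,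
the odd moments of `sin v` vanish and the cubic part of `G θ a` is exactly
`a θ (2c₂ + 3c₃θ) E[sin² v] + c₃ a³ E[sin⁴ v]`, while the remainder part is `o(a³)` once
`θ = O(a)`, because `|θ + a sin v| = O(a)` uniformly in `v`. Dividing the equation
`G (θ a) a = 0` by `a²` and letting `a → 0⁺` gives `2c₂ E[sin² v] b₁ = 0`; dividing by `a³` then
gives `2c₂ E[sin² v] b₂ + c₃ E[sin⁴ v] = 0`. The Gaussian moments come from the characteristic
function `E[cos (k v)] = exp (-k²σ²/2)`.
-/

instance isNegInvariant_gaussianReal (v : NNReal) : (gaussianReal 0 v).IsNegInvariant :=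
  ⟨by simpa [Measure.neg] using gaussianReal_map_neg (μ := 0) (v := v)⟩

lemma integral_eq_zero_of_odd {G : Type*} [MeasurableSpace G] [AddGroup G] [MeasurableNeg G]
    {μ : Measure G} [μ.IsNegInvariant] {f : G → ℝ} (hf : ∀ x, f (-x) = -f x) :
    ∫ x, f x ∂μ = 0 := by
  have h := integral_neg_eq_self f μ
  simp only [hf, integral_neg] at h
  linarith

lemma integral_cos_mul_gaussianReal (v : NNReal) (k : ℝ) :
    ∫ y, cos (k * y) ∂gaussianReal 0 v = exp (-(v * k ^ 2 / 2)) := by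
  have h := congrArg Complex.re (charFun_gaussianReal (μ := 0) (v := v) k)
  rw [charFun_apply_real, ← RCLike.re_eq_complex_re, ← integral_re] at h
  · simpa [Complex.exp_re, ← Complex.ofReal_pow, Complex.exp_ofReal_mul_I_re] using h
  · exact Integrable.of_bound (by fun_prop) 1 (ae_of_all _ fun x => by
      rw [← Complex.ofReal_mul, Complex.norm_exp_ofReal_mul_I])

lemma integrable_cos_mul {μ : Measure ℝ} [IsFiniteMeasure μ] (k : ℝ) :
    Integrable (fun y => cos (k * y)) μ :=
  .of_bound (by fun_prop) 1 (ae_of_all _ fun _ => by simpa using abs_cos_le_one _)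

lemma integrable_comp_sin {μ : Measure ℝ} [IsFiniteMeasure μ] {h : ℝ → ℝ} (hh : Continuous h) :
    Integrable (fun y => h (sin y)) μ := by
  obtain ⟨C, hC⟩ :=
    (isCompact_Icc (a := -1) (b := 1)).exists_bound_of_continuousOn hh.continuousOn
  exact .of_bound (hh.comp continuous_sin).aestronglyMeasurable C
    (ae_of_all _ fun y => hC _ ⟨neg_one_le_sin y, sin_le_one y⟩)

lemma integral_sin_sq_gaussianReal (v : NNReal) :
    ∫ y, sin y ^ 2 ∂gaussianReal 0 v = (1 - exp (-2 * v)) / 2 := by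
  have h (y : ℝ) : sin y ^ 2 = (1 - cos (2 * y)) / 2 := by rw [sin_sq_eq_half_sub]; ring
  simp_rw [h]
  rw [integral_div, integral_sub (integrable_const _) (integrable_cos_mul 2),
    integral_cos_mul_gaussianReal, integral_const, probReal_univ, smul_eq_mul, mul_one]
  ring_nf

lemma integral_sin_pow_four_gaussianReal (v : NNReal) :
    ∫ y, sin y ^ 4 ∂gaussianReal 0 v = (3 - 4 * exp (-2 * v) + exp (-8 * v)) / 8 := by
  have h (y : ℝ) : sin y ^ 4 = (3 - 4 * cos (2 * y) + cos (4 * y)) / 8 := by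
    have h₄ := cos_sq (2 * y)
    rw [show 2 * (2 * y) = 4 * y by ring] at h₄
    rw [show sin y ^ 4 = (sin y ^ 2) ^ 2 by ring, sin_sq_eq_half_sub]
    linear_combination h₄ / 4
  simp_rw [h]
  have hint : Integrable (fun y => 3 - 4 * cos (2 * y)) (gaussianReal 0 v) :=
    (integrable_const _).sub ((integrable_cos_mul 2).const_mul 4)
  rw [integral_div, integral_add hint (integrable_cos_mul 4),
    integral_sub (integrable_const _) ((integrable_cos_mul 2).const_mul 4), integral_const_mul,
    integral_cos_mul_gaussianReal, integral_cos_mul_gaussianReal, integral_const, probReal_univ,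
    smul_eq_mul, one_mul]
  ring_nf

lemma integral_cubic_comp_mul_sin {μ : Measure ℝ} [IsFiniteMeasure μ] [μ.IsNegInvariant]
    (c₂ c₃ θ a : ℝ) :
    ∫ y, (c₂ * (θ + a * sin y) ^ 2 + c₃ * (θ + a * sin y) ^ 3) * sin y ∂μ =
      a * θ * (2 * c₂ + 3 * c₃ * θ) * ∫ y, sin y ^ 2 ∂μ + c₃ * a ^ 3 * ∫ y, sin y ^ 4 ∂μ := by
  have hi (p : ℝ → ℝ) (hp : Continuous p) : Integrable (fun y => p (sin y)) μ :=
    integrable_comp_sin hp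
  set A := c₂ * θ ^ 2 + c₃ * θ ^ 3
  set B := a * (2 * c₂ * θ + 3 * c₃ * θ ^ 2)
  set C := a ^ 2 * (c₂ + 3 * c₃ * θ)
  set D := c₃ * a ^ 3
  have h (y : ℝ) : (c₂ * (θ + a * sin y) ^ 2 + c₃ * (θ + a * sin y) ^ 3) * sin y =
      A * sin y + B * sin y ^ 2 + C * sin y ^ 3 + D * sin y ^ 4 := by ring
  simp_rw [h]
  rw [integral_add (hi (fun t => A * t + B * t ^ 2 + C * t ^ 3) (by fun_prop))
      (hi (fun t => D * t ^ 4) (by fun_prop)),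
    integral_add (hi (fun t => A * t + B * t ^ 2) (by fun_prop))
      (hi (fun t => C * t ^ 3) (by fun_prop)),
    integral_add (hi (fun t => A * t) (by fun_prop)) (hi (fun t => B * t ^ 2) (by fun_prop)),
    integral_const_mul, integral_const_mul, integral_const_mul, integral_const_mul,
    integral_eq_zero_of_odd (f := sin) sin_neg,
    integral_eq_zero_of_odd (f := fun y => sin y ^ 3) fun y => by rw [sin_neg]; ring]
  ring

lemma integral_comp_add_mul_sin_eq {μ : Measure ℝ} [IsFiniteMeasure μ] [μ.IsNegInvariant]
    {f r : ℝ → ℝ} {c₂ c₃ : ℝ} (hf : ∀ x, f x = c₂ * x ^ 2 + c₃ * x ^ 3 + r x)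
    (hr : Continuous r) (θ a : ℝ) :
    ∫ y, f (θ + a * sin y) * sin y ∂μ =
      a * θ * (2 * c₂ + 3 * c₃ * θ) * ∫ y, sin y ^ 2 ∂μ + c₃ * a ^ 3 * ∫ y, sin y ^ 4 ∂μ
        + ∫ y, r (θ + a * sin y) * sin y ∂μ := by
  have h (y : ℝ) : f (θ + a * sin y) * sin y = (c₂ * (θ + a * sin y) ^ 2
      + c₃ * (θ + a * sin y) ^ 3) * sin y + r (θ + a * sin y) * sin y := by rw [hf]; ring
  simp_rw [h]
  rw [integral_add
      (integrable_comp_sin (h := fun t => (c₂ * (θ + a * t) ^ 2 + c₃ * (θ + a * t) ^ 3) * t)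
        (by fun_prop))
      (integrable_comp_sin (h := fun t => r (θ + a * t) * t) (by fun_prop)),
    integral_cubic_comp_mul_sin]

lemma isLittleO_sub_cubic_taylor {f : ℝ → ℝ} (hf : ContDiff ℝ 3 f) (h₀ : f 0 = 0)
    (h₁ : deriv f 0 = 0) :
    (fun x => f x - (iteratedDeriv 2 f 0 / 2 * x ^ 2 + iteratedDeriv 3 f 0 / 6 * x ^ 3))
      =o[𝓝 0] (· ^ 3) := by
  have h := taylor_isLittleO_univ (x₀ := 0) (n := 3) hf
  simp only [taylor_within_apply, Finset.sum_range_succ, Finset.sum_range_zero,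
    iteratedDerivWithin_univ, iteratedDeriv_zero, iteratedDeriv_one, h₀, h₁, sub_zero] at h
  refine h.congr_left fun x => ?_
  simp only [Nat.factorial, smul_eq_mul]
  ring

lemma isLittleO_integral_of_isLittleO_prod_top {α Ω : Type*} [MeasurableSpace Ω]
    {μ : Measure Ω} [IsFiniteMeasure μ] {l : Filter α} {F : α × Ω → ℝ} {g : α → ℝ}
    (h : F =o[l ×ˢ ⊤] fun p => g p.1) :
    (fun a => ∫ ω, F (a, ω) ∂μ) =o[l] g := by
  refine isLittleO_iff.2 fun ε hε => ?_
  have hC : 0 < μ.real Set.univ + 1 := by positivity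
  filter_upwards [mem_prod_top.1 (isLittleO_iff.1 h (div_pos hε hC))] with a ha
  calc ‖∫ ω, F (a, ω) ∂μ‖ ≤ ε / (μ.real Set.univ + 1) * ‖g a‖ * μ.real Set.univ :=
        norm_integral_le_of_norm_le_const (ae_of_all _ ha)
    _ ≤ ε * ‖g a‖ := by
        rw [div_mul_eq_mul_div, div_mul_eq_mul_div, div_le_iff₀ hC]
        nlinarith [mul_nonneg hε.le (norm_nonneg (g a))]

lemma isLittleO_comp_add_mul_sin {r θ : ℝ → ℝ} {n : ℕ} (hr : r =o[𝓝 0] (· ^ n))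
    (hθ : θ =O[𝓝 0] fun a => a) :
    (fun p : ℝ × ℝ => r (θ p.1 + p.1 * sin p.2) * sin p.2) =o[𝓝 0 ×ˢ ⊤] fun p => p.1 ^ n := by
  have hsin : (fun p : ℝ × ℝ => sin p.2) =O[𝓝 0 ×ˢ ⊤] fun _ => (1 : ℝ) :=
    .of_bound 1 (.of_forall fun p => by simpa using abs_sin_le_one p.2)
  have harg : (fun p : ℝ × ℝ => θ p.1 + p.1 * sin p.2) =O[𝓝 0 ×ˢ ⊤] Prod.fst :=
    (hθ.comp_tendsto tendsto_fst).add
      (((isBigO_refl Prod.fst _).mul hsin).congr_right fun p => mul_one p.1)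
  have hr' := (hr.comp_tendsto (harg.trans_tendsto tendsto_fst)).trans_isBigO (harg.pow n)
  simpa using hr'.mul_isBigO hsin

lemma tendsto_div_pow_of_isLittleO {f : ℝ → ℝ} {c : ℝ} {k : ℕ}
    (h : (fun a => f a - c * a ^ k) =o[𝓝 0] (· ^ k)) :
    Tendsto (fun a => f a / a ^ k) (𝓝[≠] 0) (𝓝 c) := by
  have h₀ := ((h.mono (nhdsWithin_le_nhds (s := {0}ᶜ))).tendsto_div_nhds_zero).add_const c
  rw [zero_add] at h₀
  refine h₀.congr' ?_
  filter_upwards [self_mem_nhdsWithin] with a (ha : a ≠ 0)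
  field_simp
  ring

lemma isLittleO_sub_linear_of_isBigO {θ : ℝ → ℝ} {b₁ b₂ : ℝ}
    (hθ : (fun a => θ a - (b₁ * a + b₂ * a ^ 2)) =O[𝓝 0] (· ^ 3)) :
    (fun a => θ a - b₁ * a) =o[𝓝 0] fun a => a := by
  have h₃ : (fun a : ℝ => a ^ 3) =o[𝓝 0] fun a => a := by
    simpa using isLittleO_pow_pow (𝕜 := ℝ) (m := 1) (by norm_num)
  have h₂ : (fun a : ℝ => b₂ * a ^ 2) =o[𝓝 0] fun a => a := by
    simpa using (isLittleO_pow_pow (𝕜 := ℝ) (m := 1) (by norm_num)).const_mul_left b₂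
  exact ((hθ.trans_isLittleO h₃).add h₂).congr_left fun a => by ring

lemma coeffs_eq_of_eventually_root {l : Filter ℝ} [l.NeBot] (hl : l ≤ 𝓝[≠] 0)
    {θ R : ℝ → ℝ} {b₁ b₂ κ ν c : ℝ} (hκ : κ ≠ 0)
    (hθ : (fun a => θ a - (b₁ * a + b₂ * a ^ 2)) =O[𝓝 0] (· ^ 3))
    (hR : R =o[𝓝 0] (· ^ 3))
    (hroot : ∀ᶠ a in l, a * θ a * (κ + ν * θ a) + c * a ^ 3 + R a = 0) :
    b₁ = 0 ∧ κ * b₂ + c = 0 := by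
  have hl₀ : l ≤ 𝓝 0 := hl.trans nhdsWithin_le_nhds
  have hid : Tendsto (fun a : ℝ => a) l (𝓝 0) := tendsto_id.mono_left hl₀
  have hne : ∀ᶠ a in l, a ≠ 0 := hl self_mem_nhdsWithin
  have h₁ : Tendsto (fun a => θ a / a) l (𝓝 b₁) := by
    simpa using (tendsto_div_pow_of_isLittleO (k := 1)
      (by simpa using isLittleO_sub_linear_of_isBigO hθ)).mono_left hl
  have hθ₀ : Tendsto θ l (𝓝 0) := by
    rw [← mul_zero b₁]
    refine (h₁.mul hid).congr' ?_
    filter_upwards [hne] with a ha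
    field_simp
  have hq : Tendsto (fun a => κ + ν * θ a) l (𝓝 κ) := by
    simpa using (hθ₀.const_mul ν).const_add κ
  have hR₂ : Tendsto (fun a => R a / a ^ 2) l (𝓝 0) :=
    (hR.trans (isLittleO_pow_pow (by norm_num))).tendsto_div_nhds_zero.mono_left hl₀
  have hR₃ : Tendsto (fun a => R a / a ^ 3) l (𝓝 0) := hR.tendsto_div_nhds_zero.mono_left hl₀
  have hb₁ : b₁ * κ + c * 0 + 0 = 0 := by
    refine tendsto_nhds_unique (((h₁.mul hq).add (hid.const_mul c)).add hR₂ |>.congr' ?_)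
      tendsto_const_nhds
    filter_upwards [hroot, hne] with a ha ha₀
    field_simp
    linear_combination ha
  obtain rfl : b₁ = 0 := by simpa [hκ] using hb₁
  have h₂ : Tendsto (fun a => θ a / a ^ 2) l (𝓝 b₂) :=
    (tendsto_div_pow_of_isLittleO ((hθ.trans_isLittleO (isLittleO_pow_pow (by norm_num))).congr_left
      fun a => by ring)).mono_left hl
  have hb₂ : b₂ * κ + c + 0 = 0 := by
    refine tendsto_nhds_unique (((h₂.mul hq).add tendsto_const_nhds).add hR₃ |>.congr' ?_)
      tendsto_const_nhds
    filter_upwards [hroot, hne] with a ha ha₀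
    field_simp
    linear_combination ha
  exact ⟨rfl, by linear_combination hb₂⟩

theorem average_equilibrium_expansion
    (ς : ℝ → ℝ) (hς : ContDiff ℝ 4 ς) (hς0 : ς 0 = 0) (hς1 : deriv ς 0 = 0)
    (hς2 : iteratedDeriv 2 ς 0 < 0) (σ : ℝ) (hσ : 0 < σ)
    (G : ℝ → ℝ → ℝ)
    (hG : ∀ θ a : ℝ, G θ a =
      ∫ y, ς (θ + a * Real.sin y) * Real.sin y
        ∂(gaussianReal 0 ⟨σ ^ 2, sq_nonneg σ⟩))
    (θ : ℝ → ℝ) (b₁ b₂ : ℝ)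
    (hθ : (fun a : ℝ => θ a - (b₁ * a + b₂ * a ^ 2)) =O[nhds 0] (fun a : ℝ => a ^ 3))
    (hroot : ∀ᶠ a in nhdsWithin 0 (Set.Ioi 0), G (θ a) a = 0) :
    b₁ = 0 ∧
    b₂ = -(iteratedDeriv 3 ς 0 *
        (3 - 4 * Real.exp (-2 * σ ^ 2) + Real.exp (-8 * σ ^ 2))) /
      (24 * iteratedDeriv 2 ς 0 * (1 - Real.exp (-2 * σ ^ 2))) := by
  -- instance search does not see through the literal variance `⟨σ ^ 2, _⟩`
  have := instIsProbabilityMeasureGaussianReal 0 ⟨σ ^ 2, sq_nonneg σ⟩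
  have := isNegInvariant_gaussianReal ⟨σ ^ 2, sq_nonneg σ⟩
  have hm₂ : ∫ y, sin y ^ 2 ∂gaussianReal 0 ⟨σ ^ 2, sq_nonneg σ⟩ = (1 - exp (-2 * σ ^ 2)) / 2 :=
    integral_sin_sq_gaussianReal _
  have hm₄ : ∫ y, sin y ^ 4 ∂gaussianReal 0 ⟨σ ^ 2, sq_nonneg σ⟩ =
      (3 - 4 * exp (-2 * σ ^ 2) + exp (-8 * σ ^ 2)) / 8 :=
    integral_sin_pow_four_gaussianReal _
  set c₂ := iteratedDeriv 2 ς 0 / 2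
  set c₃ := iteratedDeriv 3 ς 0 / 6
  set m₂ := (1 - exp (-2 * σ ^ 2)) / 2
  set m₄ := (3 - 4 * exp (-2 * σ ^ 2) + exp (-8 * σ ^ 2)) / 8
  set r := fun x => ς x - (c₂ * x ^ 2 + c₃ * x ^ 3)
  have hG' (θ a : ℝ) : G θ a = a * θ * (2 * c₂ * m₂ + 3 * c₃ * m₂ * θ) + c₃ * m₄ * a ^ 3
      + ∫ y, r (θ + a * sin y) * sin y ∂gaussianReal 0 ⟨σ ^ 2, sq_nonneg σ⟩ := by
    rw [hG, integral_comp_add_mul_sin_eq (c₂ := c₂) (c₃ := c₃) (r := r) (fun x => by ring)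
      (hς.continuous.sub (by fun_prop)), hm₂, hm₄]
    ring
  have hθO : θ =O[𝓝 0] fun a => a := by
    simpa using (isLittleO_sub_linear_of_isBigO hθ).isBigO.add
      ((isBigO_refl (fun a : ℝ => a) _).const_mul_left b₁)
  have hR : (fun a => ∫ y, r (θ a + a * sin y) * sin y ∂gaussianReal 0 ⟨σ ^ 2, sq_nonneg σ⟩)
      =o[𝓝 0] (· ^ 3) :=
    isLittleO_integral_of_isLittleO_prod_top (isLittleO_comp_add_mul_sin
      (isLittleO_sub_cubic_taylor (hς.of_le (by norm_num)) hς0 hς1) hθO)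
  have he : 0 < 1 - exp (-2 * σ ^ 2) := sub_pos.2 (Real.exp_lt_one_iff.2 (by nlinarith))
  have hκ : 2 * c₂ * m₂ ≠ 0 :=
    mul_ne_zero (mul_ne_zero two_ne_zero (div_ne_zero hς2.ne two_ne_zero)) (div_pos he two_pos).ne'
  obtain ⟨hb₁, hb₂⟩ := coeffs_eq_of_eventually_root (ν := 3 * c₃ * m₂) (c := c₃ * m₄)
    (nhdsWithin_mono _ (by simp)) hκ hθ hR
    (hroot.mono fun a ha => by rw [hG'] at ha; linear_combination ha)
  refine ⟨hb₁, (eq_div_iff (mul_ne_zero (mul_ne_zero (by norm_num) hς2.ne) he.ne')).2 ?_⟩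
  linear_combination 48 * hb₂
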